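/- Let f : ℝⁿ → ℝ ∪ {∞} be proper, closed, and convex, and η > 0. Then the Moreau envelope f^η is differentiable with gradient ∇f^η(x) = (1/η)(x − prox_{ηf}(x)), and ∇f^η is (1/η)-Lipschitz continuous. -/

import Mathlib

/-!
Write `p = prox x`. Optimality of `p` along the segment towards any `z`, together with convexity
of `f`, gives the variational inequality `⟪x - p, z - p⟫ ≤ η (f z - f p)`. Adding it at two points
shows that `prox` is firmly nonexpansive, so `x ↦ x - prox x` is nonexpansive. Testing the infimum
at `z` with `prox x` bounds the envelope from above by its tangent quadratic at `x`; exchanging `x`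
and `z` and using the Lipschitz bound on the candidate gradient gives the matching lower bound,
so the remainder is `O(‖z - x‖²)`.
-/

open Set Filter Topology
open scoped RealInnerProductSpace

noncomputable def moreauEnvelope {E : Type*} [NormedAddCommGroup E] (f : E → ℝ) (η : ℝ) (x : E) :
    ℝ :=
  ⨅ y, f y + ‖y - x‖ ^ 2 / (2 * η)

section NormedAddCommGroup

variable {E : Type*} [NormedAddCommGroup E] {f : E → ℝ} {η : ℝ}

theorem moreauEnvelope_eq_of_isMinOn {x p : E}
    (hp : IsMinOn (fun y => f y + ‖y - x‖ ^ 2 / (2 * η)) univ p) :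
    moreauEnvelope f η x = f p + ‖p - x‖ ^ 2 / (2 * η) :=
  le_antisymm (ciInf_le ⟨_, forall_mem_range.2 fun y => hp (mem_univ y)⟩ p)
    (le_ciInf fun y => hp (mem_univ y))

theorem moreauEnvelope_le_of_isMinOn {x p : E}
    (hp : IsMinOn (fun y => f y + ‖y - x‖ ^ 2 / (2 * η)) univ p) (y : E) :
    moreauEnvelope f η x ≤ f y + ‖y - x‖ ^ 2 / (2 * η) :=
  ciInf_le ⟨_, forall_mem_range.2 fun y => hp (mem_univ y)⟩ y

end NormedAddCommGroup

section InnerProductSpace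

variable {E : Type*} [NormedAddCommGroup E] [InnerProductSpace ℝ E]

theorem hasGradientAt_of_sub_le_inner_add_sq [CompleteSpace E] {φ : E → ℝ} {g : E → E}
    {K : NNReal} {C : ℝ}
    (hupper : ∀ x z, φ z - φ x ≤ ⟪g x, z - x⟫ + C * ‖z - x‖ ^ 2) (hg : LipschitzWith K g)
    (x : E) : HasGradientAt φ (g x) x := by
  rw [hasGradientAt_iff_isLittleO]
  refine Asymptotics.IsBigO.trans_isLittleO ?_ (Asymptotics.isLittleO_pow_sub_sub x one_lt_two)
  refine Asymptotics.IsBigO.of_bound (K + C) (Eventually.of_forall fun z => ?_)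
  have hlip : |⟪g z - g x, z - x⟫| ≤ K * ‖z - x‖ ^ 2 := by
    calc |⟪g z - g x, z - x⟫| ≤ ‖g z - g x‖ * ‖z - x‖ := abs_real_inner_le_norm _ _
      _ ≤ K * ‖z - x‖ * ‖z - x‖ := by
          gcongr; simpa only [dist_eq_norm] using hg.dist_le_mul z x
      _ = K * ‖z - x‖ ^ 2 := by ring
  have hzx := hupper z x
  have hxz := hupper x z
  rw [Real.norm_eq_abs, norm_pow, norm_norm, abs_le]
  have hswap : ⟪g z, x - z⟫ = -⟪g x, z - x⟫ - ⟪g z - g x, z - x⟫ := by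
    rw [← neg_sub z x, inner_neg_right, inner_sub_left]; ring
  rw [hswap, norm_sub_rev x z] at hzx
  constructor <;> linarith [abs_le.mp hlip]

variable {f : E → ℝ} {η : ℝ}

theorem moreauEnvelope_sub_le {prox : E → E}
    (hprox : ∀ x, IsMinOn (fun y => f y + ‖y - x‖ ^ 2 / (2 * η)) univ (prox x)) (x z : E) :
    moreauEnvelope f η z - moreauEnvelope f η x ≤
      ⟪(1 / η) • (x - prox x), z - x⟫ + 1 / (2 * η) * ‖z - x‖ ^ 2 := by
  have hexpand : ‖prox x - z‖ ^ 2 = ‖prox x - x‖ ^ 2 + 2 * ⟪x - prox x, z - x⟫ + ‖z - x‖ ^ 2 := by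
    rw [show prox x - z = (prox x - x) - (z - x) by abel, norm_sub_sq_real, ← neg_sub x (prox x),
      inner_neg_left]
    ring
  have hz := moreauEnvelope_le_of_isMinOn (hprox z) (prox x)
  rw [hexpand] at hz
  rw [moreauEnvelope_eq_of_isMinOn (hprox x), real_inner_smul_left]
  linarith [show (‖prox x - x‖ ^ 2 + 2 * ⟪x - prox x, z - x⟫ + ‖z - x‖ ^ 2) / (2 * η) =
    ‖prox x - x‖ ^ 2 / (2 * η) + 1 / η * ⟪x - prox x, z - x⟫ + 1 / (2 * η) * ‖z - x‖ ^ 2 by ring]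

theorem inner_sub_le_of_isMinOn_prox (hf : ConvexOn ℝ univ f) (hη : 0 < η) {x p : E}
    (hp : IsMinOn (fun y => f y + ‖y - x‖ ^ 2 / (2 * η)) univ p) (z : E) :
    ⟪x - p, z - p⟫ ≤ η * (f z - f p) := by
  have hstep : ∀ t ∈ Ioc (0 : ℝ) 1, ⟪x - p, z - p⟫ - η * (f z - f p) ≤ t * (‖z - p‖ ^ 2 / 2) := by
    rintro t ⟨ht0, ht1⟩
    have hmin : f p + ‖p - x‖ ^ 2 / (2 * η) ≤
        f (p + t • (z - p)) + ‖p + t • (z - p) - x‖ ^ 2 / (2 * η) := hp (mem_univ _)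
    have hconvex : f (p + t • (z - p)) ≤ (1 - t) * f p + t * f z := by
      have := hf.2 (mem_univ p) (mem_univ z) (sub_nonneg.2 ht1) ht0.le (sub_add_cancel 1 t)
      rwa [show (1 - t) • p + t • z = p + t • (z - p) by module, smul_eq_mul, smul_eq_mul] at this
    have hexpand : ‖p + t • (z - p) - x‖ ^ 2 =
        ‖p - x‖ ^ 2 - 2 * t * ⟪x - p, z - p⟫ + t ^ 2 * ‖z - p‖ ^ 2 := by
      rw [show p + t • (z - p) - x = (p - x) + t • (z - p) by abel, norm_add_sq_real,
        real_inner_smul_right, norm_smul, Real.norm_of_nonneg ht0.le, ← neg_sub x p,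
        inner_neg_left]
      ring
    rw [hexpand] at hmin
    have hdecrease : t * (⟪x - p, z - p⟫ - η * (f z - f p)) ≤ t * (t * (‖z - p‖ ^ 2 / 2)) := by
      have := hmin.trans (add_le_add_left hconvex _)
      field_simp at this
      nlinarith
    exact le_of_mul_le_mul_left hdecrease ht0
  have hlim : Tendsto (fun t : ℝ => t * (‖z - p‖ ^ 2 / 2)) (𝓝[>] 0) (𝓝 0) :=
    tendsto_nhdsWithin_of_tendsto_nhds ((continuous_mul_const _).tendsto' 0 0 (zero_mul _))
  linarith [ge_of_tendsto hlim (eventually_of_mem (Ioc_mem_nhdsGT one_pos) hstep)]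

theorem norm_sub_sq_le_inner_of_isMinOn_prox (hf : ConvexOn ℝ univ f) (hη : 0 < η) {x y p q : E}
    (hp : IsMinOn (fun y => f y + ‖y - x‖ ^ 2 / (2 * η)) univ p)
    (hq : IsMinOn (fun z => f z + ‖z - y‖ ^ 2 / (2 * η)) univ q) :
    ‖p - q‖ ^ 2 ≤ ⟪x - y, p - q⟫ := by
  have hpq := inner_sub_le_of_isMinOn_prox hf hη hp q
  have hqp := inner_sub_le_of_isMinOn_prox hf hη hq p
  have hsum : ⟪x - y, p - q⟫ - ‖p - q‖ ^ 2 = -(⟪x - p, q - p⟫ + ⟪y - q, p - q⟫) := by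
    rw [← real_inner_self_eq_norm_sq]
    simp only [inner_sub_left, inner_sub_right]
    ring
  linarith

theorem norm_sub_le_of_norm_sq_le_inner {a b : E} (h : ‖b‖ ^ 2 ≤ ⟪a, b⟫) : ‖a - b‖ ≤ ‖a‖ := by
  have : ‖a - b‖ ^ 2 ≤ ‖a‖ ^ 2 := by
    rw [norm_sub_sq_real]
    linarith [sq_nonneg ‖b‖]
  exact (pow_le_pow_iff_left₀ (norm_nonneg _) (norm_nonneg _) two_ne_zero).1 this

theorem lipschitzWith_one_sub_prox (hf : ConvexOn ℝ univ f) (hη : 0 < η) {prox : E → E}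
    (hprox : ∀ x, IsMinOn (fun y => f y + ‖y - x‖ ^ 2 / (2 * η)) univ (prox x)) :
    LipschitzWith 1 (fun x => x - prox x) := by
  refine LipschitzWith.of_dist_le_mul fun x y => ?_
  rw [NNReal.coe_one, one_mul, dist_eq_norm, dist_eq_norm,
    show x - prox x - (y - prox y) = x - y - (prox x - prox y) by abel]
  exact norm_sub_le_of_norm_sq_le_inner
    (norm_sub_sq_le_inner_of_isMinOn_prox hf hη (hprox x) (hprox y))

theorem lipschitzWith_moreauEnvelope_grad (hf : ConvexOn ℝ univ f) (hη : 0 < η) {prox : E → E}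
    (hprox : ∀ x, IsMinOn (fun y => f y + ‖y - x‖ ^ 2 / (2 * η)) univ (prox x)) :
    LipschitzWith (Real.toNNReal (1 / η)) (fun x => (1 / η) • (x - prox x)) := by
  have hη' : 0 ≤ 1 / η := by positivity
  have := (lipschitzWith_smul (1 / η)).comp (lipschitzWith_one_sub_prox hf hη hprox)
  rwa [mul_one, Real.nnnorm_of_nonneg hη', ← Real.toNNReal_of_nonneg hη'] at this

theorem hasGradientAt_moreauEnvelope [CompleteSpace E] (hf : ConvexOn ℝ univ f) (hη : 0 < η)
    {prox : E → E} (hprox : ∀ x, IsMinOn (fun y => f y + ‖y - x‖ ^ 2 / (2 * η)) univ (prox x))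
    (x : E) :
    HasGradientAt (moreauEnvelope f η) ((1 / η) • (x - prox x)) x :=
  hasGradientAt_of_sub_le_inner_add_sq (moreauEnvelope_sub_le hprox)
    (lipschitzWith_moreauEnvelope_grad hf hη hprox) x

end InnerProductSpace

theorem stmt4 {n : ℕ} (f : EuclideanSpace ℝ (Fin n) → ℝ) (η : ℝ) (hη : 0 < η)
    (hconv : ConvexOn ℝ Set.univ f)
    (prox : EuclideanSpace ℝ (Fin n) → EuclideanSpace ℝ (Fin n))
    (hprox : ∀ x, IsMinOn (fun y => f y + ‖y - x‖ ^ 2 / (2 * η)) Set.univ (prox x)) :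
    (∀ x, HasGradientAt
        (fun z => ⨅ y : EuclideanSpace ℝ (Fin n), (f y + ‖y - z‖ ^ 2 / (2 * η)))
        ((1 / η) • (x - prox x)) x) ∧
    LipschitzWith (Real.toNNReal (1 / η)) (fun x => (1 / η) • (x - prox x)) :=
  ⟨hasGradientAt_moreauEnvelope hconv hη hprox, lipschitzWith_moreauEnvelope_grad hconv hη hprox⟩
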